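/- arXiv:2006.16520 — 5 statements merged into one kernel-verified Lean document; each statement's English description precedes it below -/
import Mathlib

section
/- Let 𝒜 and ℬ be families of subsets of a set Z with finite VC-dimensions a = VC(𝒜) and b = VC(ℬ). If a finite set B ⊆ Z is shattered by the union family 𝒢 = {A ∪ B' : A ∈ 𝒜, B' ∈ ℬ}, then 2^{|B|} ≤ Φ_a(|B|)·Φ_b(|B|), where Φ_d(n) = Σ_{i=0}^{d} C(n,i). In particular, the VC-dimension of 𝒢 is finite, and is O((a+b)·log(a+b)). -/
open MeasureTheory Set
open scoped ENNReal symmDiff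

namespace AdvRobust

variable {X : Type*}

/-- Error region of a hypothesis `h : X → Bool`, as a subset of `X × Bool`. -/
def errSet (h : X → Bool) : Set (X × Bool) := {p | h p.1 ≠ p.2}

/-- Margin area of a hypothesis w.r.t. perturbation type `U`, as a subset of `X × Bool`. -/
def marSet (U : X → Set X) (h : X → Bool) : Set (X × Bool) :=
  {p | ∃ z ∈ U p.1, h z ≠ h p.1}

/-- Margin area of a hypothesis, identified with a subset of the domain `X`. -/
def marSetX (U : X → Set X) (h : X → Bool) : Set X :=
  {x | ∃ z ∈ U x, h z ≠ h x}

/-- Robust loss `L^U_P(h) = P(err(h) ∪ mar_U(h))`. -/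
noncomputable def robustLoss [MeasurableSpace X] (U : X → Set X)
    (P : Measure (X × Bool)) (h : X → Bool) : ℝ≥0∞ :=
  P (errSet h ∪ marSet U h)

/-- Binary (0/1) loss `L^{0/1}_P(h) = P(err(h))`. -/
noncomputable def binLoss [MeasurableSpace X]
    (P : Measure (X × Bool)) (h : X → Bool) : ℝ≥0∞ :=
  P (errSet h)

/-- Robust loss via the pointwise robust loss set `{(x,y) | ∃ z ∈ U x, h z ≠ y}`. -/
noncomputable def robustLoss' [MeasurableSpace X] (U : X → Set X)
    (P : Measure (X × Bool)) (h : X → Bool) : ℝ≥0∞ :=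
  P {p : X × Bool | ∃ z ∈ U p.1, h z ≠ p.2}

/-- A family of sets `G` shatters a finite set `B`. -/
def Shatters {Z : Type*} (G : Set (Set Z)) (B : Finset Z) : Prop :=
  ∀ F ⊆ B, ∃ g ∈ G, ∀ z ∈ B, (z ∈ g ↔ z ∈ F)

/-- The VC-dimension of `G` is at most `d`. -/
def VCdimLE {Z : Type*} (G : Set (Set Z)) (d : ℕ) : Prop :=
  ∀ B : Finset Z, Shatters G B → B.card ≤ d

/-- The VC-dimension of `G` equals `d`. -/
def VCdimEq {Z : Type*} (G : Set (Set Z)) (d : ℕ) : Prop :=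
  VCdimLE G d ∧ ∃ B : Finset Z, Shatters G B ∧ B.card = d

/-- The family `{h⁻¹(1) : h ∈ H}` associated with a class of Boolean hypotheses. -/
def classSets (H : Set (X → Bool)) : Set (Set X) := (fun h => h ⁻¹' {true}) '' H

/-- The margin class `{mar_U(h) : h ∈ H}`. -/
def marginClass (U : X → Set X) (H : Set (X → Bool)) : Set (Set (X × Bool)) :=
  (marSet U) '' H

/-!
Every subset of a set `B` shattered by the unions is the union of a trace of `𝒜` on `B` and a
trace of `ℬ` on `B`, so `2 ^ |B|` is at most the product of the numbers of traces, and each of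
these is at most `Φ_d(|B|)` by the Sauer–Shelah lemma (Pajor's form: a family has at most as many
members as it shatters sets). With `Φ_d(n) ≤ (n + 1) ^ d` this gives `2 ^ n ≤ (n + 1) ^ (a + b)`,
i.e. `n log 2 ≤ (a + b) log (n + 1)`, and bounding `log (n + 1)` by a tangent line of `log` at
`4 (a + b)` yields `n = O((a + b) log (a + b) + 1)`.
-/

section Traces

variable {Z : Type*}

open Classical in
noncomputable def trace (B : Finset Z) (A : Set Z) : Finset Z := {z ∈ B | z ∈ A}

open Classical in
noncomputable def traces (𝒜 : Set (Set Z)) (B : Finset Z) : Finset (Finset Z) :=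
  {t ∈ B.powerset | ∃ A ∈ 𝒜, trace B A = t}

@[simp]
lemma mem_trace {B : Finset Z} {A : Set Z} {z : Z} : z ∈ trace B A ↔ z ∈ B ∧ z ∈ A := by
  simp only [trace, Finset.mem_filter]

lemma trace_subset (B : Finset Z) (A : Set Z) : trace B A ⊆ B := by
  simp only [trace, Finset.filter_subset]

lemma trace_union [DecidableEq Z] (B : Finset Z) (A A' : Set Z) :
    trace B (A ∪ A') = trace B A ∪ trace B A' := by
  ext z
  simp only [mem_trace, Finset.mem_union, Set.mem_union, and_or_left]

lemma mem_traces {𝒜 : Set (Set Z)} {B t : Finset Z} :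
    t ∈ traces 𝒜 B ↔ ∃ A ∈ 𝒜, trace B A = t := by
  simp only [traces, Finset.mem_filter, Finset.mem_powerset, and_iff_right_iff_imp]
  rintro ⟨A, -, rfl⟩
  exact trace_subset B A

lemma subset_of_mem_traces {𝒜 : Set (Set Z)} {B t : Finset Z} (ht : t ∈ traces 𝒜 B) :
    t ⊆ B := by
  obtain ⟨A, -, rfl⟩ := mem_traces.1 ht
  exact trace_subset B A

lemma trace_eq_of_forall_mem_iff {B F : Finset Z} {g : Set Z} (hF : F ⊆ B)
    (h : ∀ z ∈ B, z ∈ g ↔ z ∈ F) : trace B g = F := by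
  ext z
  rw [mem_trace]
  exact ⟨fun ⟨hz, hzg⟩ => (h z hz).1 hzg, fun hzF => ⟨hF hzF, (h z (hF hzF)).2 hzF⟩⟩

lemma shatters_of_shatters_traces [DecidableEq Z] {𝒜 : Set (Set Z)} {B s : Finset Z}
    (hs : (traces 𝒜 B).Shatters s) : Shatters 𝒜 s := by
  obtain ⟨u, hu, hsu⟩ := hs.exists_superset
  have hsB : s ⊆ B := hsu.trans (subset_of_mem_traces hu)
  intro F hF
  obtain ⟨_, hu, hsu⟩ := hs hF
  obtain ⟨A, hA, rfl⟩ := mem_traces.1 hu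
  refine ⟨A, hA, fun z hz => ?_⟩
  rw [← hsu, Finset.mem_inter, mem_trace]
  exact ⟨fun hzA => ⟨hz, hsB hz, hzA⟩, fun h => h.2.2⟩

theorem card_traces_le_sum_choose {𝒜 : Set (Set Z)} {d : ℕ} (h : VCdimLE 𝒜 d) (B : Finset Z) :
    (traces 𝒜 B).card ≤ ∑ i ∈ Finset.range (d + 1), B.card.choose i := by
  classical
  have hshatterer : (traces 𝒜 B).shatterer ⊆ (Finset.range (d + 1)).biUnion B.powersetCard := by
    intro s hs
    have hs := Finset.mem_shatterer.1 hs
    obtain ⟨u, hu, hsu⟩ := hs.exists_superset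
    have hsB : s ⊆ B := hsu.trans (subset_of_mem_traces hu)
    simp only [Finset.mem_biUnion, Finset.mem_range, Finset.mem_powersetCard]
    exact ⟨s.card, Nat.lt_succ_of_le (h s (shatters_of_shatters_traces hs)), hsB, rfl⟩
  calc (traces 𝒜 B).card ≤ (traces 𝒜 B).shatterer.card := Finset.card_le_card_shatterer _
    _ ≤ ∑ i ∈ Finset.range (d + 1), (B.powersetCard i).card :=
      (Finset.card_le_card hshatterer).trans Finset.card_biUnion_le
    _ = ∑ i ∈ Finset.range (d + 1), B.card.choose i := by simp only [Finset.card_powersetCard]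

-- Each subset of `B` is the union of a trace of `𝒜` and a trace of `ℬ`.
lemma two_pow_card_le_card_traces_mul {𝒜 ℬ : Set (Set Z)} {B : Finset Z}
    (hsh : Shatters {g | ∃ A ∈ 𝒜, ∃ B' ∈ ℬ, g = A ∪ B'} B) :
    2 ^ B.card ≤ (traces 𝒜 B).card * (traces ℬ B).card := by
  classical
  have hcover : B.powerset ⊆ (traces 𝒜 B ×ˢ traces ℬ B).image (fun p => p.1 ∪ p.2) := by
    intro F hF
    obtain ⟨_, ⟨A, hA, B', hB', rfl⟩, hg⟩ := hsh F (Finset.mem_powerset.1 hF)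
    rw [Finset.mem_image]
    refine ⟨(trace B A, trace B B'), Finset.mem_product.2
      ⟨mem_traces.2 ⟨A, hA, rfl⟩, mem_traces.2 ⟨B', hB', rfl⟩⟩, ?_⟩
    rw [← trace_union]
    exact trace_eq_of_forall_mem_iff (Finset.mem_powerset.1 hF) hg
  calc 2 ^ B.card = B.powerset.card := (Finset.card_powerset B).symm
    _ ≤ (traces 𝒜 B ×ˢ traces ℬ B).card := (Finset.card_le_card hcover).trans Finset.card_image_le
    _ = (traces 𝒜 B).card * (traces ℬ B).card := Finset.card_product _ _

end Traces

lemma sum_range_choose_le_succ_pow (n d : ℕ) :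
    ∑ i ∈ Finset.range (d + 1), n.choose i ≤ (n + 1) ^ d := by
  rw [add_pow]
  refine Finset.sum_le_sum fun i hi => ?_
  have hid : 0 < d.choose i := Nat.choose_pos (Nat.lt_succ_iff.1 (Finset.mem_range.1 hi))
  calc n.choose i ≤ n ^ i := Nat.choose_le_pow n i
    _ ≤ n ^ i * 1 ^ (d - i) * d.choose i := by
      rw [one_pow, mul_one]
      exact Nat.le_mul_of_pos_right _ hid

open Real in
-- The tangent line of `log` at `4 D`; the slope `1 / 4 < log 2` is what makes it useful below.
lemma mul_log_le_mul_log_four_mul_add {D y : ℝ} (hD : 0 < D) (hy : 0 < y) :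
    D * log y ≤ D * log (4 * D) + y / 4 - D := by
  have h := log_le_sub_one_of_pos (show 0 < y / (4 * D) by positivity)
  rw [log_div hy.ne' (by positivity)] at h
  have : D * (y / (4 * D)) = y / 4 := by field_simp
  nlinarith

open Real in
lemma cast_le_of_two_pow_le_succ_pow {n D : ℕ} (h : 2 ^ n ≤ (n + 1) ^ D) :
    (n : ℝ) ≤ 5 * (D * log D + 1) := by
  rcases Nat.eq_zero_or_pos D with rfl | hD
  · obtain rfl : n = 0 := Nat.eq_zero_of_not_pos fun hn =>
      (Nat.one_lt_two_pow hn.ne').not_ge (by simpa using h)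
    simp
  have hD : (1 : ℝ) ≤ D := by exact_mod_cast hD
  have hlog : n * log 2 ≤ D * log (n + 1) := by
    have := log_le_log (by positivity) (show (2 : ℝ) ^ n ≤ ((n : ℝ) + 1) ^ D by exact_mod_cast h)
    rwa [log_pow, log_pow] at this
  have htangent := mul_log_le_mul_log_four_mul_add (by positivity : (0 : ℝ) < D)
    (by positivity : (0 : ℝ) < n + 1)
  rw [log_mul (by norm_num) (by positivity), show (4 : ℝ) = 2 ^ 2 by norm_num, log_pow] at htangent
  have hDlogD : (D : ℝ) - 1 ≤ D * log D := by
    have := one_sub_inv_le_log_of_pos (by positivity : (0 : ℝ) < D)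
    have : (D : ℝ) * (1 - (D : ℝ)⁻¹) = D - 1 := by field_simp
    nlinarith
  have hlog2 := log_two_gt_d9
  have hlog2' := log_two_lt_d9
  nlinarith

/-- If `𝒜` and `ℬ` have VC-dimensions `a` and `b`, and a finite set `B`
is shattered by the union family `{A ∪ B' : A ∈ 𝒜, B' ∈ ℬ}`, then
`2^|B| ≤ Φ_a(|B|)·Φ_b(|B|)`; in particular the VC-dimension of the union family is finite,
and is `O((a+b)·log(a+b))` (with a universal constant `c`). -/
theorem statement1 :
    ∃ c : ℝ, 0 < c ∧
      ∀ {Z : Type*} (𝒜 ℬ : Set (Set Z)) (a b : ℕ),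
        VCdimEq 𝒜 a → VCdimEq ℬ b →
        ∀ B : Finset Z, Shatters {g | ∃ A ∈ 𝒜, ∃ B' ∈ ℬ, g = A ∪ B'} B →
          (2 ^ B.card ≤ (∑ i ∈ Finset.range (a + 1), B.card.choose i) *
              (∑ i ∈ Finset.range (b + 1), B.card.choose i)) ∧
          (B.card : ℝ) ≤ c * (((a : ℝ) + b) * Real.log ((a : ℝ) + b) + 1) := by
  refine ⟨5, by norm_num, fun 𝒜 ℬ a b h𝒜 hℬ B hsh => ?_⟩
  have hΦ := (two_pow_card_le_card_traces_mul hsh).trans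
    (Nat.mul_le_mul (card_traces_le_sum_choose h𝒜.1 B) (card_traces_le_sum_choose hℬ.1 B))
  refine ⟨hΦ, ?_⟩
  have hpoly : 2 ^ B.card ≤ (B.card + 1) ^ (a + b) := by
    rw [pow_add]
    exact hΦ.trans (Nat.mul_le_mul (sum_range_choose_le_succ_pow _ a)
      (sum_range_choose_le_succ_pow _ b))
  exact_mod_cast cast_le_of_two_pow_le_succ_pow hpoly

end AdvRobust
end

section
/- There exist a finite set X with |X| = 7, a hypothesis class H = {h₁, h₂} ⊆ {0,1}^X with VC(H) = 1, a perturbation type U : X → 2^X with x ∈ U(x) for all x ∈ X, and two probability distributions P¹, P² on X×{0,1} such that: (i) for every h ∈ H, P¹(err(h)) = P²(err(h)) and P¹(mar_U(h)) = P²(mar_U(h)) (so P¹ and P² are indistinguishable using error and margin oracles for H); yet (ii) the robust-loss minimizers differ: L^U_{P¹}(h₁) + 1/6 ≤ L^U_{P¹}(h₂) and L^U_{P²}(h₂) + 1/6 ≤ L^U_{P²}(h₁). -/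
open MeasureTheory Set
open scoped ENNReal symmDiff

namespace AdvRobust

variable {X : Type*}

/-! ### Auxiliary construction for Statement 2 -/

/-- Neighborhood relation: `x` is always a neighbor of itself; in addition
`4 ∈ U 0`, `5 ∈ U 1`, `4 ∈ U 2`, `5 ∈ U 3`. -/
def nb : Fin 7 → Fin 7 → Bool := fun x z =>
  x = z || (x = 0 && z = 4) || (x = 1 && z = 5) || (x = 2 && z = 4) || (x = 3 && z = 5)

/-- The perturbation type. -/
def myU : Fin 7 → Set (Fin 7) := fun x => {z | nb x z}

/-- First hypothesis: indicator of `{4}`. -/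
def myh1 : Fin 7 → Bool := fun x => decide (x = 4)

/-- Second hypothesis: indicator of `{5}`. -/
def myh2 : Fin 7 → Bool := fun x => decide (x = 5)

/-- First distribution: uniform on `(0, true)` and `(3, false)`. -/
noncomputable def myP1 : Measure (Fin 7 × Bool) :=
  (1/2 : ℝ≥0∞) • (Measure.dirac ((0 : Fin 7), true) + Measure.dirac ((3 : Fin 7), false))

/-- Second distribution: uniform on `(1, true)` and `(2, false)`. -/
noncomputable def myP2 : Measure (Fin 7 × Bool) :=
  (1/2 : ℝ≥0∞) • (Measure.dirac ((1 : Fin 7), true) + Measure.dirac ((2 : Fin 7), false))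

lemma pair_apply (a b : Fin 7 × Bool) (S : Set (Fin 7 × Bool)) :
    ((1/2 : ℝ≥0∞) • (Measure.dirac a + Measure.dirac b)) S
      = (1/2 : ℝ≥0∞) * (S.indicator 1 a + S.indicator 1 b) := by
  rw [Measure.smul_apply, Measure.add_apply, Measure.dirac_apply, Measure.dirac_apply,
    smul_eq_mul]

lemma pair_apply_mem_mem {a b : Fin 7 × Bool} {S : Set (Fin 7 × Bool)}
    (ha : a ∈ S) (hb : b ∈ S) :
    ((1/2 : ℝ≥0∞) • (Measure.dirac a + Measure.dirac b)) S = 1 := by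
  rw [pair_apply]
  simp only [Set.indicator_of_mem ha, Set.indicator_of_mem hb, Pi.one_apply,
    one_add_one_eq_two]
  exact ENNReal.div_mul_cancel (by norm_num) (by norm_num)

lemma pair_apply_mem_not {a b : Fin 7 × Bool} {S : Set (Fin 7 × Bool)}
    (ha : a ∈ S) (hb : b ∉ S) :
    ((1/2 : ℝ≥0∞) • (Measure.dirac a + Measure.dirac b)) S = 1/2 := by
  rw [pair_apply]
  simp only [Set.indicator_of_mem ha, Set.indicator_of_notMem hb, Pi.one_apply,
    add_zero, mul_one]

lemma pair_apply_notMem {a b : Fin 7 × Bool} {S : Set (Fin 7 × Bool)}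
    (ha : a ∉ S) (hb : b ∈ S) :
    ((1/2 : ℝ≥0∞) • (Measure.dirac a + Measure.dirac b)) S = 1/2 := by
  rw [pair_apply]
  simp only [Set.indicator_of_notMem ha, Set.indicator_of_mem hb, Pi.one_apply,
    zero_add, mul_one]

lemma half_add_sixth_le_one : (1/2 : ℝ≥0∞) + 1/6 ≤ 1 :=
  calc (1/2 : ℝ≥0∞) + 1/6 ≤ 1/2 + 1/2 :=
        add_le_add le_rfl (ENNReal.div_le_div le_rfl (by norm_num))
    _ = 1 := ENNReal.add_halves 1

/-- There are a 7-point domain, a class `H = {h₁, h₂}` of VC-dimension 1,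
a perturbation type `U`, and two distributions `P¹, P²` that are indistinguishable via
error and margin oracles for `H`, yet whose robust loss minimizers in `H` differ
(with a gap of `1/6` each). -/
theorem statement2 :
    ∃ (H : Set (Fin 7 → Bool)) (h₁ h₂ : Fin 7 → Bool)
      (U : Fin 7 → Set (Fin 7)) (P1 P2 : Measure (Fin 7 × Bool)),
      IsProbabilityMeasure P1 ∧ IsProbabilityMeasure P2 ∧
      H = {h₁, h₂} ∧ h₁ ≠ h₂ ∧
      VCdimEq (classSets H) 1 ∧
      (∀ x, x ∈ U x) ∧
      (∀ h ∈ H, P1 (errSet h) = P2 (errSet h) ∧ P1 (marSet U h) = P2 (marSet U h)) ∧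
      robustLoss U P1 h₁ + 1/6 ≤ robustLoss U P1 h₂ ∧
      robustLoss U P2 h₂ + 1/6 ≤ robustLoss U P2 h₁ := by
  -- membership facts
  have me1a : ((0 : Fin 7), true) ∈ errSet myh1 := by
    simp only [errSet, Set.mem_setOf_eq]; decide
  have me1b : ((3 : Fin 7), false) ∉ errSet myh1 := by
    simp only [errSet, Set.mem_setOf_eq]; decide
  have me1c : ((1 : Fin 7), true) ∈ errSet myh1 := by
    simp only [errSet, Set.mem_setOf_eq]; decide
  have me1d : ((2 : Fin 7), false) ∉ errSet myh1 := by
    simp only [errSet, Set.mem_setOf_eq]; decide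
  have me2a : ((0 : Fin 7), true) ∈ errSet myh2 := by
    simp only [errSet, Set.mem_setOf_eq]; decide
  have me2b : ((3 : Fin 7), false) ∉ errSet myh2 := by
    simp only [errSet, Set.mem_setOf_eq]; decide
  have me2c : ((1 : Fin 7), true) ∈ errSet myh2 := by
    simp only [errSet, Set.mem_setOf_eq]; decide
  have me2d : ((2 : Fin 7), false) ∉ errSet myh2 := by
    simp only [errSet, Set.mem_setOf_eq]; decide
  have mm1a : ((0 : Fin 7), true) ∈ marSet myU myh1 := by
    simp only [marSet, myU, Set.mem_setOf_eq]; decide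
  have mm1b : ((3 : Fin 7), false) ∉ marSet myU myh1 := by
    simp only [marSet, myU, Set.mem_setOf_eq]; decide
  have mm1c : ((1 : Fin 7), true) ∉ marSet myU myh1 := by
    simp only [marSet, myU, Set.mem_setOf_eq]; decide
  have mm1d : ((2 : Fin 7), false) ∈ marSet myU myh1 := by
    simp only [marSet, myU, Set.mem_setOf_eq]; decide
  have mm2a : ((0 : Fin 7), true) ∉ marSet myU myh2 := by
    simp only [marSet, myU, Set.mem_setOf_eq]; decide
  have mm2b : ((3 : Fin 7), false) ∈ marSet myU myh2 := by
    simp only [marSet, myU, Set.mem_setOf_eq]; decide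
  have mm2c : ((1 : Fin 7), true) ∈ marSet myU myh2 := by
    simp only [marSet, myU, Set.mem_setOf_eq]; decide
  have mm2d : ((2 : Fin 7), false) ∉ marSet myU myh2 := by
    simp only [marSet, myU, Set.mem_setOf_eq]; decide
  refine ⟨{myh1, myh2}, myh1, myh2, myU, myP1, myP2, ?_, ?_, rfl, ?_, ?_, ?_, ?_, ?_, ?_⟩
  · exact ⟨pair_apply_mem_mem trivial trivial⟩
  · exact ⟨pair_apply_mem_mem trivial trivial⟩
  · intro h
    have := congrFun h 4
    simp only [myh1, myh2] at this
    exact absurd this (by decide)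
  · -- VC dimension
    have e1 : myh1 ⁻¹' {true} = ({4} : Set (Fin 7)) := by
      ext x; simp [myh1]
    have e2 : myh2 ⁻¹' {true} = ({5} : Set (Fin 7)) := by
      ext x; simp [myh2]
    have him : classSets ({myh1, myh2} : Set (Fin 7 → Bool))
        = {({4} : Set (Fin 7)), ({5} : Set (Fin 7))} := by
      rw [classSets, Set.image_insert_eq, Set.image_singleton, e1, e2]
    constructor
    · intro B hB
      by_contra hcard
      push_neg at hcard
      obtain ⟨x, hx, y, hy, hxy⟩ := Finset.one_lt_card.mp hcard
      obtain ⟨g, hg, hmem⟩ := hB B le_rfl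
      have hxg : x ∈ g := (hmem x hx).mpr hx
      have hyg : y ∈ g := (hmem y hy).mpr hy
      rw [him] at hg
      rcases hg with rfl | rfl
      · exact hxy (hxg.trans hyg.symm)
      · exact hxy (hxg.trans hyg.symm)
    · refine ⟨{4}, ?_, Finset.card_singleton 4⟩
      intro F hF
      by_cases h4 : (4 : Fin 7) ∈ F
      · refine ⟨myh1 ⁻¹' {true}, Set.mem_image_of_mem _ (Set.mem_insert _ _), ?_⟩
        intro z hz
        rw [Finset.mem_singleton] at hz
        subst hz
        rw [e1]
        simp [h4]
      · refine ⟨myh2 ⁻¹' {true}, Set.mem_image_of_mem _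
          (Set.mem_insert_of_mem _ rfl), ?_⟩
        intro z hz
        rw [Finset.mem_singleton] at hz
        subst hz
        rw [e2]
        simp [h4]
  · intro x
    simp only [myU, Set.mem_setOf_eq]
    revert x; decide
  · -- oracle indistinguishability
    intro h hh
    simp only [Set.mem_insert_iff, Set.mem_singleton_iff] at hh
    rcases hh with rfl | rfl
    · constructor
      · rw [show myP1 (errSet myh1) = 1/2 from pair_apply_mem_not me1a me1b,
          show myP2 (errSet myh1) = 1/2 from pair_apply_mem_not me1c me1d]
      · rw [show myP1 (marSet myU myh1) = 1/2 from pair_apply_mem_not mm1a mm1b,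
          show myP2 (marSet myU myh1) = 1/2 from pair_apply_notMem mm1c mm1d]
    · constructor
      · rw [show myP1 (errSet myh2) = 1/2 from pair_apply_mem_not me2a me2b,
          show myP2 (errSet myh2) = 1/2 from pair_apply_mem_not me2c me2d]
      · rw [show myP1 (marSet myU myh2) = 1/2 from pair_apply_notMem mm2a mm2b,
          show myP2 (marSet myU myh2) = 1/2 from pair_apply_mem_not mm2c mm2d]
  · -- robust loss gap for P1
    have l1 : robustLoss myU myP1 myh1 = 1/2 :=
      pair_apply_mem_not (Set.mem_union_left _ me1a)
        (fun hmem => hmem.elim me1b mm1b)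
    have l2 : robustLoss myU myP1 myh2 = 1 :=
      pair_apply_mem_mem (Set.mem_union_left _ me2a) (Set.mem_union_right _ mm2b)
    rw [l1, l2]
    exact half_add_sixth_le_one
  · -- robust loss gap for P2
    have l1 : robustLoss myU myP2 myh2 = 1/2 :=
      pair_apply_mem_not (Set.mem_union_left _ me2c)
        (fun hmem => hmem.elim me2d mm2d)
    have l2 : robustLoss myU myP2 myh1 = 1 :=
      pair_apply_mem_mem (Set.mem_union_left _ me1c) (Set.mem_union_right _ mm1d)
    rw [l1, l2]
    exact half_add_sixth_le_one

end AdvRobust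
end

section
/- There exist a finite set X with |X| = 8, a hypothesis class H ⊆ {0,1}^X with VC(H) = 1, a perturbation type U : X → 2^X with x ∈ U(x) for all x ∈ X, and two probability distributions P¹, P² on X×{0,1} such that: (i) there are h_r, h_c ∈ H with L^{0/1}_{P^i}(h_r) = 0 and P^i(mar_U(h_c)) = 0 for both i ∈ {1,2} (so both distributions are 0/1-realizable and margin-realizable by H); (ii) for every h ∈ H, P¹(err(h)) = P²(err(h)) and P¹(mar_U(h)) = P²(mar_U(h)) (indistinguishability by error and margin oracles for H); yet (iii) there are h₁, h₂ ∈ H with L^U_{P¹}(h₁) + 1/12 ≤ inf_{h∈H, h≠h₁} L^U_{P¹}(h) and L^U_{P²}(h₂) + 1/12 ≤ inf_{h∈H, h≠h₂} L^U_{P²}(h), and h₁ ≠ h₂. -/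
open MeasureTheory Set
open scoped ENNReal symmDiff

namespace AdvRobust

variable {X : Type*}

/-! ### Auxiliary construction -/


def g0 : Fin 8 → Bool := fun _ => false
def g1 : Fin 8 → Bool := fun x => decide (x.val < 4)
def g2 : Fin 8 → Bool := fun x => decide (x = 2 ∨ x = 3)

def U0 : Fin 8 → Set (Fin 8) :=
  fun x => {z | z = x ∨ (x = 0 ∧ z = 3) ∨ (x = 2 ∧ z = 1) ∨ (x = 4 ∧ z = 1)}

def HH : Set (Fin 8 → Bool) := {g0, g1, g2}

noncomputable def Q1 : Measure (Fin 8 × Bool) :=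
  ((3:ℝ≥0∞)/12) • Measure.dirac (1, true) + ((3:ℝ≥0∞)/12) • Measure.dirac (2, true)
    + ((4:ℝ≥0∞)/12) • Measure.dirac (4, false) + ((2:ℝ≥0∞)/12) • Measure.dirac (5, false)

noncomputable def Q2 : Measure (Fin 8 × Bool) :=
  ((3:ℝ≥0∞)/12) • Measure.dirac (0, true) + ((3:ℝ≥0∞)/12) • Measure.dirac (3, true)
    + ((4:ℝ≥0∞)/12) • Measure.dirac (4, false) + ((2:ℝ≥0∞)/12) • Measure.dirac (5, false)

lemma meas_apply (w1 w2 w3 w4 : ℝ≥0∞) (p1 p2 p3 p4 : Fin 8 × Bool) (s : Set (Fin 8 × Bool)) :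
    (w1 • Measure.dirac p1 + w2 • Measure.dirac p2 + w3 • Measure.dirac p3
      + w4 • Measure.dirac p4) s
      = w1 * s.indicator 1 p1 + w2 * s.indicator 1 p2 + w3 * s.indicator 1 p3
        + w4 * s.indicator 1 p4 := by
  simp [Measure.dirac_apply, smul_eq_mul]

lemma marg0 : marSet U0 g0 = ∅ := by
  ext ⟨x, y⟩
  simp [marSet, U0, Set.mem_setOf_eq, g0]

lemma marg1 : marSet U0 g1 = {p | p.1 = 4} := by
  ext ⟨x, y⟩
  simp only [marSet, U0, Set.mem_setOf_eq]
  revert x; decide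

lemma marg2 : marSet U0 g2 = {p | p.1 = 0 ∨ p.1 = 2} := by
  ext ⟨x, y⟩
  simp only [marSet, U0, Set.mem_setOf_eq]
  revert x; decide

-- measure values
lemma q1_univ : Q1 Set.univ = 1 := by
  rw [Q1, meas_apply]
  norm_num [ENNReal.div_add_div_same, ENNReal.div_self]

lemma q2_univ : Q2 Set.univ = 1 := by
  rw [Q2, meas_apply]
  norm_num [ENNReal.div_add_div_same, ENNReal.div_self]

lemma q1_err_g0 : Q1 (errSet g0) = 6/12 := by
  rw [Q1, meas_apply]
  norm_num [Set.indicator_apply, errSet, g0, ENNReal.div_add_div_same]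

lemma q2_err_g0 : Q2 (errSet g0) = 6/12 := by
  rw [Q2, meas_apply]
  norm_num [Set.indicator_apply, errSet, g0, ENNReal.div_add_div_same]

lemma q1_err_g1 : Q1 (errSet g1) = 0 := by
  rw [Q1, meas_apply]
  norm_num [Set.indicator_apply, errSet, g1]

lemma q2_err_g1 : Q2 (errSet g1) = 0 := by
  rw [Q2, meas_apply]
  norm_num [Set.indicator_apply, errSet, g1]

lemma q1_err_g2 : Q1 (errSet g2) = 3/12 := by
  rw [Q1, meas_apply]
  norm_num [Set.indicator_apply, errSet, g2]
  simp (config := { decide := true }) [ENNReal.div_add_div_same]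

lemma q2_err_g2 : Q2 (errSet g2) = 3/12 := by
  rw [Q2, meas_apply]
  norm_num [Set.indicator_apply, errSet, g2]
  simp (config := { decide := true }) [ENNReal.div_add_div_same]

lemma q1_mar_g0 : Q1 (marSet U0 g0) = 0 := by rw [marg0]; simp
lemma q2_mar_g0 : Q2 (marSet U0 g0) = 0 := by rw [marg0]; simp

lemma q1_mar_g1 : Q1 (marSet U0 g1) = 4/12 := by
  rw [marg1, Q1, meas_apply]
  norm_num [Set.indicator_apply]
  simp (config := { decide := true }) [ENNReal.div_add_div_same]

lemma q2_mar_g1 : Q2 (marSet U0 g1) = 4/12 := by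
  rw [marg1, Q2, meas_apply]
  norm_num [Set.indicator_apply]
  simp (config := { decide := true }) [ENNReal.div_add_div_same]

lemma q1_mar_g2 : Q1 (marSet U0 g2) = 3/12 := by
  rw [marg2, Q1, meas_apply]
  norm_num [Set.indicator_apply]
  simp (config := { decide := true }) [ENNReal.div_add_div_same]

lemma q2_mar_g2 : Q2 (marSet U0 g2) = 3/12 := by
  rw [marg2, Q2, meas_apply]
  norm_num [Set.indicator_apply]
  simp (config := { decide := true }) [ENNReal.div_add_div_same]

lemma q1_rob_g0 : robustLoss U0 Q1 g0 = 6/12 := by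
  rw [robustLoss, marg0, Set.union_empty]; exact q1_err_g0

lemma q2_rob_g0 : robustLoss U0 Q2 g0 = 6/12 := by
  rw [robustLoss, marg0, Set.union_empty]; exact q2_err_g0

lemma q1_rob_g1 : robustLoss U0 Q1 g1 = 4/12 := by
  rw [robustLoss, marg1, Q1, meas_apply]
  norm_num [Set.indicator_apply, errSet, g1]
  simp (config := { decide := true }) [ENNReal.div_add_div_same]

lemma q2_rob_g1 : robustLoss U0 Q2 g1 = 4/12 := by
  rw [robustLoss, marg1, Q2, meas_apply]
  norm_num [Set.indicator_apply, errSet, g1]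
  simp (config := { decide := true }) [ENNReal.div_add_div_same]

lemma q1_rob_g2 : robustLoss U0 Q1 g2 = 6/12 := by
  rw [robustLoss, marg2, Q1, meas_apply]
  norm_num [Set.indicator_apply, errSet, g2, ENNReal.div_add_div_same]
  simp (config := { decide := true }) [ENNReal.div_add_div_same]
  norm_num

lemma q2_rob_g2 : robustLoss U0 Q2 g2 = 3/12 := by
  rw [robustLoss, marg2, Q2, meas_apply]
  norm_num [Set.indicator_apply, errSet, g2]
  simp (config := { decide := true }) [ENNReal.div_add_div_same]

lemma gap1 : (4:ℝ≥0∞)/12 + 1/12 ≤ 6/12 := by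
  rw [ENNReal.div_add_div_same]
  exact ENNReal.div_le_div_right (by norm_num) 12

lemma gap2 : (3:ℝ≥0∞)/12 + 1/12 ≤ 4/12 := by
  rw [ENNReal.div_add_div_same]
  exact ENNReal.div_le_div_right (by norm_num) 12

lemma gap3 : (3:ℝ≥0∞)/12 + 1/12 ≤ 6/12 := by
  rw [ENNReal.div_add_div_same]
  exact ENNReal.div_le_div_right (by norm_num) 12

lemma ne01 : g0 ≠ g1 := fun h => absurd (congrFun h 0) (by decide)
lemma ne02 : g0 ≠ g2 := fun h => absurd (congrFun h 2) (by decide)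
lemma ne12 : g1 ≠ g2 := fun h => absurd (congrFun h 0) (by decide)

lemma sub01 : g0 ⁻¹' {true} ⊆ g1 ⁻¹' {true} := by
  intro x hx; simp [g0] at hx

lemma sub02 : g0 ⁻¹' {true} ⊆ g2 ⁻¹' {true} := by
  intro x hx; simp [g0] at hx

lemma sub21 : g2 ⁻¹' {true} ⊆ g1 ⁻¹' {true} := by
  intro x hx
  simp only [Set.mem_preimage, Set.mem_singleton_iff] at hx ⊢
  fin_cases x <;> simp_all [g1, g2]

lemma chain : ∀ g ∈ classSets HH, ∀ g' ∈ classSets HH, g ⊆ g' ∨ g' ⊆ g := by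
  rintro g ⟨h, hh, rfl⟩ g' ⟨h', hh', rfl⟩
  simp only [HH, Set.mem_insert_iff, Set.mem_singleton_iff] at hh hh'
  rcases hh with rfl | rfl | rfl <;> rcases hh' with rfl | rfl | rfl
  · exact Or.inl subset_rfl
  · exact Or.inl sub01
  · exact Or.inl sub02
  · exact Or.inr sub01
  · exact Or.inl subset_rfl
  · exact Or.inr sub21
  · exact Or.inr sub02
  · exact Or.inl sub21
  · exact Or.inl subset_rfl

lemma vc : VCdimEq (classSets HH) 1 := by
  constructor
  · intro B hB
    by_contra hc
    push_neg at hc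
    obtain ⟨a, ha, b, hb, hab⟩ := Finset.one_lt_card.mp hc
    obtain ⟨g, hg, htr⟩ := hB {a} (Finset.singleton_subset_iff.mpr ha)
    obtain ⟨g', hg', htr'⟩ := hB {b} (Finset.singleton_subset_iff.mpr hb)
    have hag : a ∈ g := (htr a ha).mpr (Finset.mem_singleton_self a)
    have hbg : b ∉ g := fun h => hab ((Finset.mem_singleton.mp ((htr b hb).mp h))).symm
    have hbg' : b ∈ g' := (htr' b hb).mpr (Finset.mem_singleton_self b)
    have hag' : a ∉ g' := fun h => hab (Finset.mem_singleton.mp ((htr' a ha).mp h))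
    rcases chain g hg g' hg' with h | h
    · exact hag' (h hag)
    · exact hbg (h hbg')
  · refine ⟨{0}, ?_, rfl⟩
    intro F hF
    by_cases h0 : (0 : Fin 8) ∈ F
    · refine ⟨g1 ⁻¹' {true}, ⟨g1, by simp [HH], rfl⟩, ?_⟩
      intro z hz
      rw [Finset.mem_singleton] at hz; subst hz
      exact iff_of_true (by simp [g1]) h0
    · refine ⟨g0 ⁻¹' {true}, ⟨g0, by simp [HH], rfl⟩, ?_⟩
      intro z hz
      rw [Finset.mem_singleton] at hz; subst hz
      exact iff_of_false (by simp [g0]) h0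


/-- There are an 8-point domain, a class `H` of VC-dimension 1, a
perturbation type `U`, and two distributions `P¹, P²` that are 0/1-realizable and
margin-realizable by `H`, indistinguishable via error and margin oracles for `H`, yet
whose (unique, by a gap of `1/12`) robust loss minimizers in `H` differ. -/
theorem statement3 :
    ∃ (H : Set (Fin 8 → Bool)) (U : Fin 8 → Set (Fin 8))
      (P1 P2 : Measure (Fin 8 × Bool)),
      IsProbabilityMeasure P1 ∧ IsProbabilityMeasure P2 ∧
      VCdimEq (classSets H) 1 ∧
      (∀ x, x ∈ U x) ∧
      (∃ hr ∈ H, binLoss P1 hr = 0 ∧ binLoss P2 hr = 0) ∧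
      (∃ hc ∈ H, P1 (marSet U hc) = 0 ∧ P2 (marSet U hc) = 0) ∧
      (∀ h ∈ H, P1 (errSet h) = P2 (errSet h) ∧ P1 (marSet U h) = P2 (marSet U h)) ∧
      (∃ h₁ ∈ H, ∃ h₂ ∈ H, h₁ ≠ h₂ ∧
        robustLoss U P1 h₁ + 1/12 ≤ (⨅ h ∈ {g | g ∈ H ∧ g ≠ h₁}, robustLoss U P1 h) ∧
        robustLoss U P2 h₂ + 1/12 ≤ (⨅ h ∈ {g | g ∈ H ∧ g ≠ h₂}, robustLoss U P2 h)) := by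
  refine ⟨HH, U0, Q1, Q2, ⟨q1_univ⟩, ⟨q2_univ⟩, vc, ?_, ?_, ?_, ?_, ?_⟩
  · intro x; exact Or.inl rfl
  · exact ⟨g1, by simp [HH], q1_err_g1, q2_err_g1⟩
  · exact ⟨g0, by simp [HH], q1_mar_g0, q2_mar_g0⟩
  · intro h hh
    simp only [HH, Set.mem_insert_iff, Set.mem_singleton_iff] at hh
    rcases hh with rfl | rfl | rfl
    · rw [q1_err_g0, q2_err_g0, q1_mar_g0, q2_mar_g0]; exact ⟨rfl, rfl⟩
    · rw [q1_err_g1, q2_err_g1, q1_mar_g1, q2_mar_g1]; exact ⟨rfl, rfl⟩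
    · rw [q1_err_g2, q2_err_g2, q1_mar_g2, q2_mar_g2]; exact ⟨rfl, rfl⟩
  · refine ⟨g1, by simp [HH], g2, by simp [HH], ne12, ?_, ?_⟩
    · rw [q1_rob_g1]
      refine le_iInf fun h => le_iInf fun hh => ?_
      obtain ⟨hmem, hne⟩ := hh
      simp only [HH, Set.mem_insert_iff, Set.mem_singleton_iff] at hmem
      rcases hmem with rfl | rfl | rfl
      · rw [q1_rob_g0]; exact gap1
      · exact absurd rfl hne
      · rw [q1_rob_g2]; exact gap1
    · rw [q2_rob_g2]
      refine le_iInf fun h => le_iInf fun hh => ?_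
      obtain ⟨hmem, hne⟩ := hh
      simp only [HH, Set.mem_insert_iff, Set.mem_singleton_iff] at hmem
      rcases hmem with rfl | rfl | rfl
      · rw [q2_rob_g0]; exact gap3
      · rw [q2_rob_g1]; exact gap2
      · exact absurd rfl hne

end AdvRobust
end

section
/- Let X be a set, U : X → 2^X a perturbation type, H a class of hypotheses X → {0,1}, and f : ℕ → ℕ. Suppose there is a perfect non-adaptive adversary for (H, U) with query complexity f: that is, a map Q assigning to each finite set S ⊆ X a finite query set Q(S) ⊆ X with |Q(S)| ≤ f(|S|), and a map Out such that for every h ∈ H and every finite S, Out(S, h|_{Q(S)}) (depending on h only through the labels h assigns to Q(S)) is an admissible attack on S with respect to h. Then every point x ∈ X has a witness set of size at most f(1) + 1; indeed w(x) = Q({x}) ∪ {x} is a witness set for x. -/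
open MeasureTheory Set
open scoped ENNReal symmDiff

namespace AdvRobust

variable {X : Type*}

/-- `S'` is an admissible attack on `S` w.r.t. hypothesis `h` and perturbation type `U`:
every point of `S'` is an adversarial point of some point of `S`, and every point of `S`
that has an adversarial point gets one in `S'`. -/
def AdmissibleAttack (U : X → Set X) (h : X → Bool) (S S' : Finset X) : Prop :=
  (∀ x' ∈ S', ∃ x ∈ S, x' ∈ U x ∧ h x' ≠ h x) ∧
  (∀ x ∈ S, (∃ z ∈ U x, h z ≠ h x) → ∃ x' ∈ S', x' ∈ U x ∧ h x' ≠ h x)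

/-- If `(H, U)` has a perfect non-adaptive adversary with query
complexity `f` — query sets `Q S` with `|Q S| ≤ f |S|` and an output map `Out` depending
on `h` only through the labels on `Q S`, always producing an admissible attack — then
every `x` has a witness set of size at most `f 1 + 1`, namely `Q {x} ∪ {x}`. -/
theorem statement12 {X : Type*} [DecidableEq X] (U : X → Set X) (hU : ∀ x, x ∈ U x)
    (H : Set (X → Bool)) (f : ℕ → ℕ)
    (Q : Finset X → Finset X)
    (hQcard : ∀ S : Finset X, (Q S).card ≤ f S.card)
    (Out : (S : Finset X) → ({z : X // z ∈ Q S} → Bool) → Finset X)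
    (hOut : ∀ h ∈ H, ∀ S : Finset X,
        AdmissibleAttack U h S (Out S (fun z => h z.1))) :
    ∀ x : X,
      (insert x (Q {x})).card ≤ f 1 + 1 ∧
      ∃ g : ({z : X // z ∈ insert x (Q {x})} → Bool) → Bool,
        ∀ h ∈ H, (g (fun z => h z.1) = true ↔ ∃ z ∈ U x, h z ≠ h x) := by
  intro x
  constructor
  · calc (insert x (Q {x})).card ≤ (Q {x}).card + 1 := Finset.card_insert_le _ _
      _ ≤ f 1 + 1 := by
        have := hQcard {x}
        simp only [Finset.card_singleton] at this
        omega
  · refine ⟨fun L => decide ((Out {x}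
        (fun z => L ⟨z.1, Finset.mem_insert_of_mem z.2⟩)).Nonempty), ?_⟩
    intro h hh
    have hadm := hOut h hh {x}
    obtain ⟨h1, h2⟩ := hadm
    simp only [decide_eq_true_eq]
    constructor
    · rintro ⟨x', hx'⟩
      obtain ⟨x0, hx0, hx0U, hx0ne⟩ := h1 x' hx'
      rw [Finset.mem_singleton] at hx0
      subst hx0
      exact ⟨x', hx0U, hx0ne⟩
    · rintro ⟨z, hz, hzne⟩
      obtain ⟨x', hx', _, _⟩ := h2 x (Finset.mem_singleton_self x) ⟨z, hz, hzne⟩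
      exact ⟨x', hx'⟩

end AdvRobust
end

section
/- Let X be a set, U : X → 2^X a perturbation type, and H a class of hypotheses X → {0,1} of finite VC-dimension d. Suppose: (a) H admits a proper (non-robust) sample compression scheme of size k(n) = O(d·log n): there is a decoder φ such that for every h ∈ H and every finite sequence T of at most n points labeled by h, there is a subsequence K of T of length at most k(n) with φ(K) ∈ H and φ(K) agreeing with h on all of T; and (b) (H, U) has a perfect, proper, non-adaptive, efficient per-point adversary with budget C: a map Q : X → Finset X with Q(x) ⊆ U(x) and |Q(x)| ≤ C for all x, and a map Att such that for every h ∈ H and x ∈ X, Att(x, h|_{Q(x) ∪ {x}}) returns an adversarial point of x with respect to h whenever one exists (i.e., some z ∈ U(x) with h(z) ≠ h(x)) and returns none otherwise, with the returned point lying in Q(x). Then (H, U) admits a robust proper compression scheme with O(1) bits of side information per compressed point and total size O(d·log m) on samples of size m: there exist B ∈ ℕ depending only on C and decoders ψ_m : (X×{0,1})^{k'} × {0,1}^{B·k'} → H with k' = O(d·log m), such that for every h ∈ H and every finite S_X ⊆ X with |S_X| = m, there exist a k'-tuple K of pairs (x, h(x)) with x ∈ S_X and a bit string b ∈ {0,1}^{B·k'}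 with ℓ^U(h, x, h(x)) = ℓ^U(ψ_m(K, b), x, h(x)) for all x ∈ S_X. -/
/-!
Compress the query-augmented sample `T = ⋃_{x ∈ S} ({x} ∪ Q x)` with the non-robust scheme;
since `|T| ≤ m (C + 1)`, this keeps `k(m (C + 1)) = O(d log m)` points. Each compressed point
lies in the query block of some sample point `x`, so it can be stored as `x` together with
`O(C)` bits: its position in the block and its label. The decoded hypothesis `g` agrees with `h` on `x` and on `Q x`, so the adversary, which
only looks at these labels, answers identically for `g` and `h`; since it is perfect, `x` is
robustly misclassified by `g` exactly when it is by `h`.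
-/

open MeasureTheory Set
open scoped ENNReal symmDiff

namespace AdvRobust

variable {X : Type*}

noncomputable section

section SideInformation

variable {α : Type*} [Fintype α]

def oneHot (a : α) : Fin (Fintype.card α) → Bool :=
  fun r => decide (Fintype.equivFin α a = r)

theorem oneHot_injective : Function.Injective (oneHot (α := α)) := by
  intro a b hab
  simpa [oneHot] using congrFun hab (Fintype.equivFin α b)

def encodeBits {k : ℕ} (σ : Fin k → α) : Fin (Fintype.card α * k) → Bool :=
  fun p => oneHot (σ (finProdFinEquiv.symm p).2) (finProdFinEquiv.symm p).1

def decodeBits [Nonempty α] {k : ℕ} (bits : Fin (Fintype.card α * k) → Bool)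
    (i : Fin k) : α :=
  Function.invFun oneHot fun r => bits (finProdFinEquiv (r, i))

theorem decodeBits_encodeBits [Nonempty α] {k : ℕ} (σ : Fin k → α) :
    decodeBits (encodeBits σ) = σ := by
  funext i
  simp only [decodeBits, encodeBits, Equiv.symm_apply_apply]
  exact Function.leftInverse_invFun oneHot_injective (σ i)

end SideInformation

theorem _root_.List.reduceOption_ofFn_getElem? {α : Type*} {k : ℕ} (L : List α)
    (hL : L.length ≤ k) : (List.ofFn fun i : Fin k => L[(i : ℕ)]?).reduceOption = L := by
  have hpad : (List.ofFn fun i : Fin k => L[(i : ℕ)]?)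
      = L.map some ++ List.replicate (k - L.length) none := by
    refine List.ext_getElem ?_ fun n hn _ => ?_
    · simp only [List.length_ofFn, List.length_append, List.length_map, List.length_replicate]
      omega
    · simp only [List.getElem_ofFn, List.getElem_append, List.length_map]
      split_ifs with h
      · simp [h]
      · simp [List.getElem?_eq_none (by omega : L.length ≤ n)]
  rw [hpad, List.reduceOption_append, List.reduceOption_replicate_none, List.append_nil]
  simp [List.reduceOption, List.filterMap_map]

section QuerySample

variable (Q : X → Finset X)

def queryBlock (x : X) : List X := x :: (Q x).toList

def querySample (S : Finset X) : List X := S.toList.flatMap (queryBlock Q)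

theorem mem_querySample {S : Finset X} {t : X} :
    t ∈ querySample Q S ↔ ∃ x ∈ S, t = x ∨ t ∈ Q x := by
  simp [querySample, queryBlock]

theorem length_querySample_le {C : ℕ} (hQ : ∀ x, (Q x).card ≤ C) (S : Finset X) :
    (querySample Q S).length ≤ S.card * (C + 1) := by
  rw [querySample, List.length_flatMap, ← S.length_toList,
    ← List.length_map (f := fun x => (queryBlock Q x).length)]
  refine List.sum_le_card_nsmul _ _ fun n hn => ?_
  obtain ⟨x, -, rfl⟩ := List.mem_map.1 hn
  simpa [queryBlock] using hQ x

def blockPoint (x : X) (j : ℕ) : X := (queryBlock Q x).getD j x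

theorem exists_blockPoint_eq {C : ℕ} {x t : X} (hQ : (Q x).card ≤ C) (ht : t = x ∨ t ∈ Q x) :
    ∃ j : Fin (C + 1), blockPoint Q x j = t := by
  have ht' : t ∈ queryBlock Q x := by simpa [queryBlock] using ht
  obtain ⟨j, hj, rfl⟩ := List.getElem_of_mem ht'
  have hlen : (queryBlock Q x).length = (Q x).card + 1 := by simp [queryBlock]
  exact ⟨⟨j, by omega⟩, List.getD_eq_getElem _ _ hj⟩

/-- Slot `i` holds the position, in the query block of `anchor i`, and the label of one
compressed point, or `none` when the slot is unused. -/
def decodeSample {k C : ℕ} (anchor : Fin k → X) (σ : Fin k → Option (Fin (C + 1) × Bool)) :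
    List (X × Bool) :=
  (List.ofFn fun i => (σ i).map fun jb => (blockPoint Q (anchor i) jb.1, jb.2)).reduceOption

theorem exists_decodeSample_eq {k C : ℕ} {S : Finset X} (hS : S.Nonempty ∨ k = 0)
    {L : List (X × Bool)} (hL : L.length ≤ k)
    (hmem : ∀ p ∈ L, ∃ x ∈ S, ∃ j : Fin (C + 1), blockPoint Q x j = p.1) :
    ∃ anchor : Fin k → X, (∀ i, anchor i ∈ S) ∧
      ∃ σ : Fin k → Option (Fin (C + 1) × Bool), decodeSample Q anchor σ = L := by
  obtain ⟨pad, hpad⟩ : ∃ pad : Fin k → X, ∀ i, pad i ∈ S := by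
    rcases hS with ⟨x₀, hx₀⟩ | rfl
    · exact ⟨fun _ => x₀, fun _ => hx₀⟩
    · exact ⟨finZeroElim, finZeroElim⟩
  choose x hxS j hj using hmem
  refine ⟨fun i => if hi : (i : ℕ) < L.length then x L[i] (L.getElem_mem hi) else pad i,
    fun i => by dsimp only; split_ifs; exacts [hxS _ _, hpad i],
    fun i => if hi : (i : ℕ) < L.length then some (j L[i] (L.getElem_mem hi), L[i].2) else none,
    ?_⟩
  refine (congrArg _ (congrArg List.ofFn (funext fun i => ?_))).trans
    (L.reduceOption_ofFn_getElem? hL)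
  by_cases hi : (i : ℕ) < L.length
  · simp [hi, hj]
  · simp [hi]

end QuerySample

def IsPerfectAdversary (U : X → Set X) (H : Set (X → Bool)) (Q : X → Finset X)
    (Att : (x : X) → ({z : X // z = x ∨ z ∈ Q x} → Bool) → Option X) : Prop :=
  ∀ h ∈ H, ∀ x, (Att x fun z => h z.1).isSome ↔ ∃ z ∈ U x, h z ≠ h x

theorem IsPerfectAdversary.exists_ne_iff {U : X → Set X} {H : Set (X → Bool)}
    {Q : X → Finset X} {Att : (x : X) → ({z : X // z = x ∨ z ∈ Q x} → Bool) → Option X}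
    (hAtt : IsPerfectAdversary U H Q Att) {g h : X → Bool} (hg : g ∈ H) (hh : h ∈ H) {x : X}
    (hx : g x = h x) (hQ : ∀ z ∈ Q x, g z = h z) :
    (∃ z ∈ U x, h z ≠ h x) ↔ ∃ z ∈ U x, g z ≠ h x := by
  have hres : (fun z : {z : X // z = x ∨ z ∈ Q x} => g z.1) = fun z => h z.1 :=
    funext fun ⟨z, hz⟩ => hz.elim (fun e => e ▸ hx) (hQ z)
  rw [← hAtt h hh, ← hres, hAtt g hg, hx]

theorem le_sup_Icc_of_le {kk : ℕ → ℕ} {a n N : ℕ} (hn : n ≤ N) (ha : a ≤ kk n) (han : a ≤ n) :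
    a ≤ (Finset.Icc 1 N).sup kk := by
  rcases n.eq_zero_or_pos with rfl | hpos
  · omega
  · exact ha.trans (Finset.le_sup (Finset.mem_Icc.2 ⟨hpos, hn⟩))

theorem cast_sup_Icc_le {kk : ℕ → ℕ} {ca : ℝ} {d : ℕ} (hca : 0 ≤ ca)
    (hkk : ∀ n : ℕ, (kk n : ℝ) ≤ ca * ((d : ℝ) * Real.log n + 1)) (N m : ℕ) :
    (((Finset.Icc 1 (m * N)).sup kk : ℕ) : ℝ) ≤ ca * (d * Real.log N + 1) * (d * Real.log m + 1) := by
  have hlogN := Real.log_natCast_nonneg N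
  have hlogm := Real.log_natCast_nonneg m
  rcases (Finset.Icc 1 (m * N)).eq_empty_or_nonempty with hs | hs
  · rw [hs, Finset.sup_empty, Nat.bot_eq_zero, Nat.cast_zero]
    positivity
  obtain ⟨n, hn, hsup⟩ := Finset.exists_mem_eq_sup _ hs kk
  obtain ⟨hn1, hnN⟩ := Finset.mem_Icc.1 hn
  obtain ⟨hm, hN⟩ : m ≠ 0 ∧ N ≠ 0 := Nat.mul_ne_zero_iff.1 (by omega)
  have hlogn : Real.log n ≤ Real.log m + Real.log N := by
    rw [← Real.log_mul (by exact_mod_cast hm) (by exact_mod_cast hN)]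
    exact Real.log_le_log (by positivity) (by exact_mod_cast hnN)
  rw [hsup]
  calc (kk n : ℝ) ≤ ca * (d * Real.log n + 1) := hkk n
    _ ≤ ca * (d * (Real.log m + Real.log N) + 1) := by gcongr
    _ ≤ ca * (d * Real.log N + 1) * (d * Real.log m + 1) := by
      nlinarith [mul_nonneg (mul_nonneg hca (mul_nonneg d.cast_nonneg d.cast_nonneg))
        (mul_nonneg hlogN hlogm)]

open Classical in
def robustDecoder (φ : List (X × Bool) → (X → Bool)) (H : Set (X → Bool))
    (h₀ : X → Bool) (Q : X → Finset X) (C : ℕ) {k : ℕ} (K : Fin k → X × Bool)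
    (bits : Fin (Fintype.card (Option (Fin (C + 1) × Bool)) * k) → Bool) : X → Bool :=
  let g := φ (decodeSample Q (fun i => (K i).1) (decodeBits bits))
  if g ∈ H then g else h₀

theorem robustDecoder_mem {φ : List (X × Bool) → (X → Bool)} {H : Set (X → Bool)}
    {h₀ : X → Bool} (h₀H : h₀ ∈ H) (Q : X → Finset X) (C : ℕ) {k : ℕ} (K : Fin k → X × Bool)
    (bits : Fin (Fintype.card (Option (Fin (C + 1) × Bool)) * k) → Bool) :
    robustDecoder φ H h₀ Q C K bits ∈ H := by
  unfold robustDecoder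
  dsimp only
  split_ifs with hg
  exacts [hg, h₀H]

theorem robustDecoder_encodeBits {φ : List (X × Bool) → (X → Bool)} {H : Set (X → Bool)}
    (h₀ : X → Bool) {Q : X → Finset X} {C k : ℕ} {K : Fin k → X × Bool}
    {σ : Fin k → Option (Fin (C + 1) × Bool)} {L : List (X × Bool)}
    (hσ : decodeSample Q (fun i => (K i).1) σ = L) (hL : φ L ∈ H) :
    robustDecoder φ H h₀ Q C K (encodeBits σ) = φ L := by
  rw [robustDecoder, decodeBits_encodeBits, hσ]
  exact if_pos hL

theorem statement14_general {X : Type*} (U : X → Set X)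
    (H : Set (X → Bool)) (d : ℕ) (hVC : VCdimEq (classSets H) d)
    -- (a) proper (non-robust) sample compression of size `k(n) = O(d log n)`
    (ca : ℝ) (hca : 0 < ca) (kk : ℕ → ℕ)
    (hkk : ∀ n : ℕ, (kk n : ℝ) ≤ ca * ((d : ℝ) * Real.log (n : ℝ) + 1))
    (φ : List (X × Bool) → (X → Bool))
    (hcomp : ∀ h ∈ H, ∀ T : List X,
        ∃ K : List (X × Bool),
          K.Sublist (T.map fun x => (x, h x)) ∧ K.length ≤ kk T.length ∧
          φ K ∈ H ∧ ∀ x ∈ T, φ K x = h x)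
    -- (b) perfect, proper, non-adaptive, efficient per-point adversary with budget `C`
    (C : ℕ) (Q : X → Finset X)
    (hQcard : ∀ x : X, (Q x).card ≤ C)
    (Att : (x : X) → ({z : X // z = x ∨ z ∈ Q x} → Bool) → Option X)
    (hAtt : ∀ h ∈ H, ∀ x : X,
        (∀ x' : X, Att x (fun z => h z.1) = some x' →
            x' ∈ Q x ∧ x' ∈ U x ∧ h x' ≠ h x) ∧
        ((∃ z ∈ U x, h z ≠ h x) → ∃ x' : X, Att x (fun z => h z.1) = some x')) :
    ∃ (B : ℕ) (c' : ℝ), 0 < c' ∧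
      ∃ k' : ℕ → ℕ,
        (∀ m : ℕ, (k' m : ℝ) ≤ c' * ((d : ℝ) * Real.log (m : ℝ) + 1)) ∧
        ∃ ψ : (m : ℕ) → (Fin (k' m) → X × Bool) → (Fin (B * k' m) → Bool) → (X → Bool),
          (∀ m K bits, ψ m K bits ∈ H) ∧
          ∀ m : ℕ, ∀ h ∈ H, ∀ SX : Finset X, SX.card = m →
            ∃ K : Fin (k' m) → X × Bool,
              (∀ i, (K i).1 ∈ SX ∧ (K i).2 = h (K i).1) ∧
              ∃ bits : Fin (B * k' m) → Bool,
                ∀ x ∈ SX,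
                  ((∃ z ∈ U x, h z ≠ h x) ↔ (∃ z ∈ U x, ψ m K bits z ≠ h x)) := by
  obtain ⟨h₀, h₀H⟩ : H.Nonempty := by
    obtain ⟨-, B, hB, -⟩ := hVC
    obtain ⟨-, ⟨h₀, h₀H, -⟩, -⟩ := hB ∅ (Finset.empty_subset _)
    exact ⟨h₀, h₀H⟩
  have hAdv : IsPerfectAdversary U H Q Att := fun h hh x =>
    ⟨fun hs => let ⟨x', hx'⟩ := Option.isSome_iff_exists.1 hs; ⟨x', ((hAtt h hh x).1 x' hx').2⟩,
      fun he => Option.isSome_iff_exists.2 ((hAtt h hh x).2 he)⟩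
  refine ⟨Fintype.card (Option (Fin (C + 1) × Bool)), ca * (d * Real.log (C + 1 : ℕ) + 1),
    by positivity, fun m => (Finset.Icc 1 (m * (C + 1))).sup kk, cast_sup_Icc_le hca.le hkk _,
    fun _ => robustDecoder φ H h₀ Q C, fun _ => robustDecoder_mem h₀H Q C, ?_⟩
  intro m h hh SX hSX
  obtain ⟨K₀, hK₀T, hK₀len, hK₀H, hK₀agree⟩ := hcomp h hh (querySample Q SX)
  have hK₀len' : K₀.length ≤ (Finset.Icc 1 (m * (C + 1))).sup kk :=
    le_sup_Icc_of_le (hSX ▸ length_querySample_le Q hQcard SX) hK₀len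
      (by simpa using hK₀T.length_le)
  have hS : SX.Nonempty ∨ (Finset.Icc 1 (m * (C + 1))).sup kk = 0 := by
    rcases SX.eq_empty_or_nonempty with rfl | hne
    · simp [← hSX]
    · exact .inl hne
  obtain ⟨anchor, hanchor, σ, hσ⟩ := exists_decodeSample_eq Q hS hK₀len' fun p hp => by
    obtain ⟨t, ht, rfl⟩ := List.mem_map.1 (hK₀T.subset hp)
    obtain ⟨x, hx, htx⟩ := (mem_querySample Q).1 ht
    exact ⟨x, hx, exists_blockPoint_eq Q (hQcard x) htx⟩
  refine ⟨fun i => (anchor i, h (anchor i)), fun i => ⟨hanchor i, rfl⟩, encodeBits σ, ?_⟩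
  intro x hx
  beta_reduce
  rw [robustDecoder_encodeBits h₀ hσ hK₀H]
  exact hAdv.exists_ne_iff hK₀H hh (hK₀agree x ((mem_querySample Q).2 ⟨x, hx, .inl rfl⟩))
    fun z hz => hK₀agree z ((mem_querySample Q).2 ⟨x, hx, .inr hz⟩)

/-- If `H` (of VC-dimension `d`) admits a proper sample compression
scheme of size `k(n) = O(d·log n)`, and `(H, U)` has a perfect, proper, non-adaptive,
efficient per-point adversary with budget `C` (query sets `Q x ⊆ U x`, `|Q x| ≤ C`, and an
attack map `Att` depending on `h` only through the labels on `Q x ∪ {x}` that returns an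
adversarial point in `Q x` whenever one exists and `none` otherwise), then `(H, U)` admits
a robust proper compression scheme of size `k' = O(d·log m)` with `O(1)` bits of side
information per compressed point. -/
theorem statement14 {X : Type*} (U : X → Set X) (hU : ∀ x, x ∈ U x)
    (H : Set (X → Bool)) (d : ℕ) (hVC : VCdimEq (classSets H) d)
    -- (a) proper (non-robust) sample compression of size `k(n) = O(d log n)`
    (ca : ℝ) (hca : 0 < ca) (kk : ℕ → ℕ)
    (hkk : ∀ n : ℕ, (kk n : ℝ) ≤ ca * ((d : ℝ) * Real.log (n : ℝ) + 1))
    (φ : List (X × Bool) → (X → Bool))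
    (hcomp : ∀ h ∈ H, ∀ T : List X,
        ∃ K : List (X × Bool),
          K.Sublist (T.map fun x => (x, h x)) ∧ K.length ≤ kk T.length ∧
          φ K ∈ H ∧ ∀ x ∈ T, φ K x = h x)
    -- (b) perfect, proper, non-adaptive, efficient per-point adversary with budget `C`
    (C : ℕ) (Q : X → Finset X)
    (hQsub : ∀ x : X, (Q x : Set X) ⊆ U x) (hQcard : ∀ x : X, (Q x).card ≤ C)
    (Att : (x : X) → ({z : X // z = x ∨ z ∈ Q x} → Bool) → Option X)
    (hAtt : ∀ h ∈ H, ∀ x : X,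
        (∀ x' : X, Att x (fun z => h z.1) = some x' →
            x' ∈ Q x ∧ x' ∈ U x ∧ h x' ≠ h x) ∧
        ((∃ z ∈ U x, h z ≠ h x) → ∃ x' : X, Att x (fun z => h z.1) = some x')) :
    ∃ (B : ℕ) (c' : ℝ), 0 < c' ∧
      ∃ k' : ℕ → ℕ,
        (∀ m : ℕ, (k' m : ℝ) ≤ c' * ((d : ℝ) * Real.log (m : ℝ) + 1)) ∧
        ∃ ψ : (m : ℕ) → (Fin (k' m) → X × Bool) → (Fin (B * k' m) → Bool) → (X → Bool),
          (∀ m K bits, ψ m K bits ∈ H) ∧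
          ∀ m : ℕ, ∀ h ∈ H, ∀ SX : Finset X, SX.card = m →
            ∃ K : Fin (k' m) → X × Bool,
              (∀ i, (K i).1 ∈ SX ∧ (K i).2 = h (K i).1) ∧
              ∃ bits : Fin (B * k' m) → Bool,
                ∀ x ∈ SX,
                  ((∃ z ∈ U x, h z ≠ h x) ↔ (∃ z ∈ U x, ψ m K bits z ≠ h x)) :=
  statement14_general U H d hVC ca hca kk hkk φ hcomp C Q hQcard Att hAtt

end

end AdvRobust
end
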